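/- arXiv:1401.6000 — 8 statements merged into one kernel-verified Lean document; each statement's English description precedes it below -/
import Mathlib

section
/- Two distinct maximal 2-vertex-connected subgraphs of a directed graph have at most one vertex in common. -/
variable {V : Type*}

/-- Reachability inside the induced subgraph on `S` of the digraph with edge relation `E`. -/
def ReachIn (E : V → V → Prop) (S : Set V) : V → V → Prop :=
  Relation.ReflTransGen (fun a b => a ∈ S ∧ b ∈ S ∧ E a b)

/-- The induced subgraph on `S` is strongly connected. -/
def SCOn (E : V → V → Prop) (S : Set V) : Prop :=
  ∀ u ∈ S, ∀ w ∈ S, ReachIn E S u w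

/-- `C` is a `k`-vertex-connected vertex set: `|C| ≥ k+1` and removing any fewer than `k`
vertices leaves the induced subgraph strongly connected. -/
def IsKVCSet (E : V → V → Prop) (k : ℕ) (C : Set V) : Prop :=
  k + 1 ≤ C.ncard ∧ ∀ Y ⊆ C, Y.ncard < k → SCOn E (C \ Y)

/-- `C` is a `2`-vertex-connected vertex set. -/
def IsTwoVCSet (E : V → V → Prop) (C : Set V) : Prop :=
  3 ≤ C.ncard ∧ ∀ w ∈ C, SCOn E (C \ {w})

/-- A `2`-vertex-connected component: a maximal `2`-vertex-connected vertex set. -/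
def IsTwoVCC (E : V → V → Prop) (C : Set V) : Prop :=
  IsTwoVCSet E C ∧ ∀ D, IsTwoVCSet E D → C ⊆ D → D = C

/-- A `k`-vertex-connected component: a maximal `k`-vertex-connected vertex set. -/
def IsKVCC (E : V → V → Prop) (k : ℕ) (C : Set V) : Prop :=
  IsKVCSet E k C ∧ ∀ D, IsKVCSet E k D → C ⊆ D → D = C

/-- `C` is a strongly connected component of the induced subgraph on `S`. -/
def IsSCCOn (E : V → V → Prop) (S C : Set V) : Prop :=
  C ⊆ S ∧ C.Nonempty ∧ (∀ u ∈ C, ∀ w ∈ C, ReachIn E S u w) ∧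
    ∀ D, C ⊆ D → D ⊆ S → (∀ u ∈ D, ∀ w ∈ D, ReachIn E S u w) → D = C

/-- `p` is a (directed) walk from `u` to `w`, given as the list of its vertices. -/
def IsWalk (E : V → V → Prop) (u w : V) (p : List V) : Prop :=
  p.head? = some u ∧ p.getLast? = some w ∧ p.Chain' E

/-- `p` is a (directed, simple) path from `u` to `w`. -/
def IsPath (E : V → V → Prop) (u w : V) (p : List V) : Prop :=
  IsWalk E u w p ∧ p.Nodup

/-- In the flowgraph with start vertex `v`, vertex `u` dominates vertex `x`:
every walk from `v` to `x` contains `u`. -/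
def Dominates (E : V → V → Prop) (v u x : V) : Prop :=
  ∀ p, IsWalk E v x p → u ∈ p

/-- `u` is a non-trivial dominator in the flowgraph with start vertex `v`. -/
def NontrivDom (E : V → V → Prop) (v u : V) : Prop :=
  ∃ x, x ≠ v ∧ x ≠ u ∧ Dominates E v u x

/-- `u` is the immediate dominator of `x` in the flowgraph with start vertex `v`:
`u` is a dominator of `x` other than `x`, and every dominator of `x` other than `x`
dominates `u`.  Equivalently, `x` is a child of `u` in the dominator tree. -/
def IsImd (E : V → V → Prop) (v u x : V) : Prop :=
  Dominates E v u x ∧ u ≠ x ∧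
    ∀ d, Dominates E v d x → d ≠ x → Dominates E v d u

/-- `w` is a strong articulation point of the digraph `E`: its removal increases the
number of strongly connected components, i.e. some two vertices `u, x ≠ w` lie in a
common strongly connected component of `E` but not of `E` with `w` removed. -/
def IsSAP (E : V → V → Prop) (w : V) : Prop :=
  ∃ u x : V, u ≠ w ∧ x ≠ w ∧ ReachIn E Set.univ u x ∧ ReachIn E Set.univ x u ∧
    ¬(ReachIn E ({w} : Set V)ᶜ u x ∧ ReachIn E ({w} : Set V)ᶜ x u)


lemma reachIn_mono {E : V → V → Prop} {S T : Set V} (hST : S ⊆ T) {u w : V}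
    (h : ReachIn E S u w) : ReachIn E T u w :=
  Relation.ReflTransGen.mono (fun a b (hab : a ∈ S ∧ b ∈ S ∧ E a b) => ⟨hST hab.1, hST hab.2.1, hab.2.2⟩) _ _ h

/-- Two distinct maximal 2-vertex-connected subgraphs of a directed graph have at most
one vertex in common. -/
theorem stmt0 [Fintype V] (E : V → V → Prop) (C₁ C₂ : Set V)
    (h₁ : IsKVCC E 2 C₁) (h₂ : IsKVCC E 2 C₂) (hne : C₁ ≠ C₂) :
    (C₁ ∩ C₂).ncard ≤ 1 := by
  by_contra hcard
  push_neg at hcard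
  -- C₁ ∪ C₂ is a 2-vc set
  have hunion : IsKVCSet E 2 (C₁ ∪ C₂) := by
    constructor
    · exact le_trans h₁.1.1 (Set.ncard_le_ncard Set.subset_union_left (Set.toFinite _))
    · intro Y hY hYcard
      have hvex : ¬ (C₁ ∩ C₂ ⊆ Y) := by
        intro hsub
        have := Set.ncard_le_ncard hsub (Set.toFinite Y)
        omega
      obtain ⟨v, hv, hvY⟩ := Set.not_subset.mp hvex
      have key : ∀ C : Set V, IsKVCSet E 2 C → C ⊆ C₁ ∪ C₂ →
          ∀ a ∈ C \ Y, ∀ b ∈ C \ Y, ReachIn E ((C₁ ∪ C₂) \ Y) a b := by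
        intro C hC hCsub a ha b hb
        have h1 : (Y ∩ C).ncard < 2 :=
          lt_of_le_of_lt (Set.ncard_le_ncard Set.inter_subset_left (Set.toFinite Y)) hYcard
        have h2 := hC.2 (Y ∩ C) Set.inter_subset_right h1
        have hEq : C \ (Y ∩ C) = C \ Y := by
          ext x; simp only [Set.mem_diff, Set.mem_inter_iff]; tauto
        rw [hEq] at h2
        have hsub2 : C \ Y ⊆ (C₁ ∪ C₂) \ Y := fun x hx => ⟨hCsub hx.1, hx.2⟩
        exact reachIn_mono hsub2 (h2 a ha b hb)
      intro u hu w hw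
      have hreach : ∀ a ∈ (C₁ ∪ C₂) \ Y, ReachIn E ((C₁ ∪ C₂) \ Y) a v ∧
          ReachIn E ((C₁ ∪ C₂) \ Y) v a := by
        intro a ha
        rcases ha.1 with h | h
        · exact ⟨key C₁ h₁.1 Set.subset_union_left a ⟨h, ha.2⟩ v ⟨hv.1, hvY⟩,
            key C₁ h₁.1 Set.subset_union_left v ⟨hv.1, hvY⟩ a ⟨h, ha.2⟩⟩
        · exact ⟨key C₂ h₂.1 Set.subset_union_right a ⟨h, ha.2⟩ v ⟨hv.2, hvY⟩,
            key C₂ h₂.1 Set.subset_union_right v ⟨hv.2, hvY⟩ a ⟨h, ha.2⟩⟩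
      exact ((hreach u hu).1).trans ((hreach w hw).2)
  have e1 := h₁.2 (C₁ ∪ C₂) hunion Set.subset_union_left
  have e2 := h₂.2 (C₁ ∪ C₂) hunion Set.subset_union_right
  exact hne (e1.symm.trans e2)
end

section
/- Let G be a strongly connected directed graph and v any vertex of G. A vertex w ≠ v is a strong articulation point of G if and only if w is a non-trivial dominator in the flowgraph G(v) or a non-trivial dominator in the flowgraph G^R(v), where G^R is the reversal of G. -/
variable {V : Type*}

lemma walk_of_reach {E : V → V → Prop} {S : Set V} {u x : V}
    (h : ReachIn E S u x) (hu : u ∈ S) :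
    ∃ p, IsWalk E u x p ∧ ∀ a ∈ p, a ∈ S := by
  induction h with
  | refl => exact ⟨[u], ⟨rfl, rfl, List.isChain_singleton u⟩, by simpa using hu⟩
  | @tail b c hab hbc ih =>
    obtain ⟨p, ⟨h1, h2, h3⟩, hS⟩ := ih
    obtain ⟨hbS, hcS, hE⟩ := hbc
    refine ⟨p ++ [c], ⟨?_, ?_, ?_⟩, ?_⟩
    · rw [List.head?_append_of_ne_nil]
      · exact h1
      · intro h; subst h; simp at h1
    · simp
    · simp only [List.Chain']; rw [List.isChain_append]
      refine ⟨h3, List.isChain_singleton _, ?_⟩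
      intro a ha b hb
      rw [h2] at ha
      simp at ha hb
      subst ha; subst hb; exact hE
    · intro a ha
      rcases List.mem_append.mp ha with h | h
      · exact hS a h
      · simp at h; subst h; exact hcS

lemma reach_of_walk {E : V → V → Prop} {S : Set V} :
    ∀ (p : List V) (u x : V), IsWalk E u x p → (∀ a ∈ p, a ∈ S) →
      ReachIn E S u x := by
  intro p
  induction p with
  | nil => intro u x h _; simp [IsWalk] at h
  | cons a rest ih =>
    rintro u x ⟨h1, h2, h3⟩ hS
    simp at h1
    subst h1
    cases rest with
    | nil =>
      simp at h2; subst h2; exact Relation.ReflTransGen.refl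
    | cons b t =>
      simp only [List.Chain'] at h3; rw [List.isChain_cons_cons] at h3
      have hw : IsWalk E b x (b :: t) :=
        ⟨rfl, by simpa [List.getLast?_cons_cons] using h2, h3.2⟩
      exact Relation.ReflTransGen.head
        ⟨hS a (by simp), hS b (by simp), h3.1⟩
        (ih b x hw (fun y hy => hS y (by simp [hy])))

lemma ReachIn.flip {E : V → V → Prop} {S : Set V} {u x : V}
    (h : ReachIn E S u x) : ReachIn (fun a b => E b a) S x u := by
  induction h with
  | refl => exact Relation.ReflTransGen.refl
  | tail _ hbc ih =>
    exact Relation.ReflTransGen.head ⟨hbc.2.1, hbc.1, hbc.2.2⟩ ih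

lemma dom_iff {E : V → V → Prop} {v w x : V} (hv : v ≠ w) (hx : x ≠ w) :
    Dominates E v w x ↔ ¬ ReachIn E (({w} : Set V)ᶜ) v x := by
  constructor
  · intro hD hR
    obtain ⟨p, hp, hS⟩ := walk_of_reach hR (by simpa using hv)
    have := hS w (hD p hp)
    simp at this
  · intro hR p hp
    by_contra hw
    exact hR (reach_of_walk p v x hp (fun a ha => by
      simp only [Set.mem_compl_iff, Set.mem_singleton_iff]
      rintro rfl; exact hw ha))

/-- In a strongly connected digraph `G`, for any vertex `v`, a vertex `w ≠ v` is a strong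
articulation point (removal destroys strong connectivity) iff `w` is a non-trivial
dominator in the flowgraph `G(v)` or in the flowgraph `Gᴿ(v)`. -/
theorem stmt3 [Fintype V] (E : V → V → Prop) (hSC : SCOn E Set.univ)
    (v w : V) (hwv : w ≠ v) :
    (¬ SCOn E (({w} : Set V)ᶜ)) ↔
      NontrivDom E v w ∨ NontrivDom (fun a b => E b a) v w := by
  constructor
  · intro hnot
    by_contra hcon
    push_neg at hcon
    obtain ⟨h1, h2⟩ := hcon
    apply hnot
    have hvx : ∀ x, x ≠ w → ReachIn E ({w} : Set V)ᶜ v x := by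
      intro x hx
      by_cases hxv : x = v
      · subst hxv; exact Relation.ReflTransGen.refl
      · by_contra hr
        exact h1 ⟨x, hxv, hx, (dom_iff hwv.symm hx).mpr hr⟩
    have hxv : ∀ x, x ≠ w → ReachIn E ({w} : Set V)ᶜ x v := by
      intro x hx
      by_cases hxv : x = v
      · subst hxv; exact Relation.ReflTransGen.refl
      · by_contra hr
        refine h2 ⟨x, hxv, hx, (dom_iff hwv.symm hx).mpr ?_⟩
        intro h
        exact hr h.flip
    intro u hu x hx
    simp only [Set.mem_compl_iff, Set.mem_singleton_iff] at hu hx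
    exact (hxv u hu).trans (hvx x hx)
  · rintro (⟨x, hxv, hxw, hdom⟩ | ⟨x, hxv, hxw, hdom⟩) <;> intro hSC
    · exact (dom_iff hwv.symm hxw).mp hdom
        (hSC v (by simp [hwv.symm]) x (by simp [hxw]))
    · exact (dom_iff hwv.symm hxw).mp hdom
        (hSC x (by simp [hxw]) v (by simp [hwv.symm])).flip
end

section
/- Let G = (V, E) be a strongly connected directed graph and v ∈ V. If w ∈ V with w ≠ v and w is not a direct successor of v in both the dominator tree DT(v) of the flowgraph G(v) and the dominator tree DT^R(v) of the flowgraph G^R(v), then w does not belong to any 2-vertex-connected component of G containing v. Equivalently: every 2-vcc containing v is a subset of (K(v) ∩ K^R(v)) ∪ {v}, where K(v) (resp. K^R(v)) is the set of children of v in DT(v) (resp. DT^R(v)). -/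
variable {V : Type*}

lemma reach_walk (E : V → V → Prop) (S : Set V) {u w : V} (h : ReachIn E S u w)
    (hu : u ∈ S) : ∃ p, IsWalk E u w p ∧ ∀ x ∈ p, x ∈ S := by
  induction h with
  | refl => exact ⟨[u], ⟨rfl, rfl, List.isChain_singleton u⟩, by simpa⟩
  | @tail b c hab hbc ih =>
    obtain ⟨p, ⟨hh, hl, hc⟩, hmem⟩ := ih
    obtain ⟨hb, hc', he⟩ := hbc
    have hpne : p ≠ [] := by intro h; simp [h] at hh
    refine ⟨p ++ [c], ⟨?_, ?_, ?_⟩, ?_⟩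
    · rw [List.head?_append_of_ne_nil _ hpne]; exact hh
    · simp [List.getLast?_concat]
    · change List.IsChain _ _; rw [List.isChain_append]
      refine ⟨hc, List.isChain_singleton _, ?_⟩
      intro x hx y hy
      simp only [List.head?_cons, Option.mem_def, Option.some.injEq] at hy
      rw [hl] at hx
      simp only [Option.mem_def, Option.some.injEq] at hx
      subst hx; subst hy; exact he
    · intro x hx
      rcases List.mem_append.1 hx with h1 | h1
      · exact hmem x h1
      · simp at h1; subst h1; exact hc'

lemma walk_reverse (E : V → V → Prop) {u w : V} {p : List V} (h : IsWalk E u w p) :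
    IsWalk (fun a b => E b a) w u p.reverse := by
  obtain ⟨hh, hl, hc⟩ := h
  refine ⟨?_, ?_, ?_⟩
  · rw [List.head?_reverse]; exact hl
  · rw [List.getLast?_reverse]; exact hh
  · change List.IsChain _ _; rw [List.isChain_reverse]; exact hc

/-- Every 2-vertex-connected component of a strongly connected digraph `G` containing `v`
is a subset of `(K(v) ∩ Kᴿ(v)) ∪ {v}`, where `K(v)` (resp. `Kᴿ(v)`) is the set of children
of `v` in the dominator tree of the flowgraph `G(v)` (resp. `Gᴿ(v)`). -/
theorem stmt4 (E : V → V → Prop) (hSC : SCOn E Set.univ) (v : V) (C : Set V)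
    (hC : IsTwoVCC E C) (hv : v ∈ C) :
    C ⊆ ({w | IsImd E v v w} ∩ {w | IsImd (fun a b => E b a) v v w}) ∪ {v} := by
  intro w hw
  by_cases hwv : w = v
  · exact Or.inr hwv
  obtain ⟨⟨hcard, hsc⟩, _⟩ := hC
  -- for any d ≠ v, d ≠ w, find a set S containing v and w, avoiding d, strongly connected
  have hS : ∀ d : V, d ≠ v → d ≠ w → ∃ S : Set V, v ∈ S ∧ w ∈ S ∧ d ∉ S ∧ SCOn E S := by
    intro d hdv hdw
    by_cases hdC : d ∈ C
    · exact ⟨C \ {d}, ⟨hv, fun h => hdv (h.symm)⟩, ⟨hw, fun h => hdw (h.symm)⟩,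
        fun h => h.2 rfl, hsc d hdC⟩
    · have hne : (C \ {v, w}).Nonempty := by
        rw [Set.nonempty_iff_ne_empty]
        intro hempty
        have hsub : C ⊆ {v, w} := by
          intro x hx
          by_contra hx'
          exact absurd (Set.mem_diff_of_mem hx hx') (by rw [hempty]; exact id)
        have : C.ncard ≤ ({v, w} : Set V).ncard :=
          Set.ncard_le_ncard hsub ((Set.finite_singleton w).insert v)
        have h2 : ({v, w} : Set V).ncard ≤ 2 := by
          have := Set.ncard_insert_le v ({w} : Set V)
          simpa [Set.ncard_singleton] using this
        omega
      obtain ⟨u, huC, hu⟩ := hne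
      simp only [Set.mem_insert_iff, Set.mem_singleton_iff, not_or] at hu
      exact ⟨C \ {u}, ⟨hv, fun h => hu.1 h.symm⟩, ⟨hw, fun h => hu.2 h.symm⟩,
        fun h => hdC h.1, hsc u huC⟩
  have hvw : v ≠ w := fun h => hwv h.symm
  have hdomv : ∀ (F : V → V → Prop) (d x : V), Dominates F v d v → d = v := by
    intro F d x hd
    have := hd [v] ⟨rfl, rfl, List.isChain_singleton v⟩
    simpa using this
  refine Or.inl ⟨?_, ?_⟩
  · -- IsImd E v v w
    refine ⟨fun p hp => ?_, hvw, ?_⟩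
    · exact List.mem_of_mem_head? (by rw [hp.1]; rfl)
    · intro d hd hdw
      by_cases hdv : d = v
      · subst hdv
        intro p hp
        exact List.mem_of_mem_head? (by rw [hp.1]; rfl)
      · exfalso
        obtain ⟨S, hvS, hwS, hdS, hscS⟩ := hS d hdv hdw
        obtain ⟨p, hwalk, hmem⟩ := reach_walk E S (hscS v hvS w hwS) hvS
        exact hdS (hmem d (hd p hwalk))
  · -- IsImd Eᴿ v v w
    refine ⟨fun p hp => ?_, hvw, ?_⟩
    · exact List.mem_of_mem_head? (by rw [hp.1]; rfl)
    · intro d hd hdw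
      by_cases hdv : d = v
      · subst hdv
        intro p hp
        exact List.mem_of_mem_head? (by rw [hp.1]; rfl)
      · exfalso
        obtain ⟨S, hvS, hwS, hdS, hscS⟩ := hS d hdv hdw
        obtain ⟨p, hwalk, hmem⟩ := reach_walk E S (hscS w hwS v hvS) hwS
        have hrev := walk_reverse E hwalk
        have := hd p.reverse hrev
        exact hdS (hmem d (List.mem_reverse.1 this))
end

section
/- A vertex w of a strongly connected directed graph G with distinguished vertex v satisfies imd(w) = v in the flowgraph G(v) if and only if (v, w) is an edge of G or there exist two internally vertex-disjoint directed paths from v to w in G. -/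
variable {V : Type*}

namespace MAux
open List

def pxs (p : List V) : List (V × V) := p.zip p.tail

@[simp] lemma pxs_nil : pxs ([] : List V) = [] := rfl
@[simp] lemma pxs_single (a : V) : pxs [a] = [] := rfl
@[simp] lemma pxs_cons (a b : V) (l : List V) : pxs (a :: b :: l) = (a,b) :: pxs (b :: l) := rfl

lemma chain'_iff_pxs {R : V → V → Prop} {p : List V} :
    p.Chain' R ↔ ∀ q ∈ pxs p, R q.1 q.2 := by
  induction p with
  | nil => simp [List.Chain']
  | cons a t ih =>
    cases t with
    | nil => simp [List.Chain']
    | cons b t =>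
      simp only [List.Chain']
      rw [List.isChain_cons_cons, pxs_cons]
      simp only [List.mem_cons, forall_eq_or_imp]
      exact and_congr Iff.rfl ih

lemma fst_mem_dropLast {p : List V} {q : V × V} (h : q ∈ pxs p) : q.1 ∈ p.dropLast := by
  induction p with
  | nil => simp [pxs] at h
  | cons a t ih =>
    cases t with
    | nil => simp [pxs] at h
    | cons b t =>
      rw [pxs_cons, List.mem_cons] at h
      rcases h with h | h
      · subst h; simp
      · have := ih h
        simp only [List.dropLast_cons₂, List.mem_cons]
        right; exact this

lemma snd_mem_tail {p : List V} {q : V × V} (h : q ∈ pxs p) : q.2 ∈ p.tail := by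
  induction p with
  | nil => simp [pxs] at h
  | cons a t ih =>
    cases t with
    | nil => simp [pxs] at h
    | cons b t =>
      rw [pxs_cons, List.mem_cons] at h
      rcases h with h | h
      · subst h; simp
      · exact List.mem_of_mem_tail (ih h)

lemma fst_mem {p : List V} {q : V × V} (h : q ∈ pxs p) : q.1 ∈ p :=
  List.dropLast_sublist p |>.mem (fst_mem_dropLast h)

lemma snd_mem {p : List V} {q : V × V} (h : q ∈ pxs p) : q.2 ∈ p :=
  List.mem_of_mem_tail (snd_mem_tail h)

lemma pxs_subset_cons {p : List V} (a : V) {q : V × V} (h : q ∈ pxs p) : q ∈ pxs (a :: p) := by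
  cases p with
  | nil => simp [pxs] at h
  | cons b t => rw [pxs_cons]; exact List.mem_cons_of_mem _ h

lemma pxs_subset_of_prefix : ∀ {p q : List V}, p <+: q → ∀ x ∈ pxs p, x ∈ pxs q := by
  intro p
  induction p with
  | nil => intro q _ x hx; simp [pxs] at hx
  | cons a t ih =>
    intro q hpre x hx
    cases t with
    | nil => simp [pxs] at hx
    | cons b t =>
      obtain ⟨r, hr⟩ := hpre
      subst hr
      rw [List.cons_append, List.cons_append, pxs_cons, List.mem_cons]
      rw [pxs_cons, List.mem_cons] at hx
      rcases hx with hx | hx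
      · exact Or.inl hx
      · exact Or.inr (ih ⟨r, rfl⟩ x hx)

lemma pxs_subset_of_suffix {p q : List V} (h : p <:+ q) : ∀ x ∈ pxs p, x ∈ pxs q := by
  obtain ⟨r, hr⟩ := h
  subst hr
  induction r with
  | nil => intro x hx; simpa using hx
  | cons a r ih => intro x hx; exact pxs_subset_cons a (ih x hx)

lemma pxs_subset_of_infix {p q : List V} (h : p <:+: q) : ∀ x ∈ pxs p, x ∈ pxs q := by
  obtain ⟨s, t, hst⟩ := h
  subst hst
  intro x hx
  rw [List.append_assoc]
  exact pxs_subset_of_suffix ⟨s, rfl⟩ x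
    (pxs_subset_of_prefix (⟨t, rfl⟩ : p <+: p ++ t) x hx)

lemma getLast_pair_mem : ∀ {l : List V} (h : l ≠ []) (x : V), (l.getLast h, x) ∈ pxs (l ++ [x]) := by
  intro l
  induction l with
  | nil => intro h; simp at h
  | cons a t ih =>
    intro h x
    cases t with
    | nil => simp [pxs]
    | cons b t =>
      rw [List.getLast_cons (by simp)]
      rw [show (a :: b :: t) ++ [x] = a :: b :: (t ++ [x]) from rfl, pxs_cons]
      exact List.mem_cons_of_mem _ (ih (by simp) x)

lemma exists_pxs_of_mem : ∀ {p : List V} {x : V}, x ∈ p → 2 ≤ p.length →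
    ∃ q ∈ pxs p, q.1 = x ∨ q.2 = x := by
  intro p
  induction p with
  | nil => simp
  | cons a t ih =>
    intro x hx hlen
    cases t with
    | nil => simp at hlen
    | cons b t =>
      rw [List.mem_cons] at hx
      rcases hx with rfl | hx
      · exact ⟨(x, b), by simp⟩
      · cases t with
        | nil =>
          simp only [List.mem_singleton] at hx
          subst hx
          refine ⟨(a, x), by simp, Or.inr rfl⟩
        | cons c t =>
          obtain ⟨q, hq, hq2⟩ := ih hx (by simp)
          exact ⟨q, pxs_subset_cons a hq, hq2⟩

lemma nodup_pxs_ne {p : List V} (hnd : p.Nodup) {q : V × V} (h : q ∈ pxs p) : q.1 ≠ q.2 := by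
  induction p with
  | nil => simp [pxs] at h
  | cons a t ih =>
    cases t with
    | nil => simp [pxs] at h
    | cons b t =>
      rw [pxs_cons, List.mem_cons] at h
      rcases h with rfl | h
      · simp only [List.nodup_cons, List.mem_cons] at hnd
        exact fun he => hnd.1 (Or.inl he)
      · exact ih (List.nodup_cons.mp hnd).2 h

end MAux

section Walks
open List MAux

variable {E F : V → V → Prop} {u w x a b : V} {p q : List V}

lemma IsWalk.ne_nil (h : IsWalk E u w p) : p ≠ [] := by
  intro he; subst he; simp [IsWalk] at h

lemma IsWalk.start_mem (h : IsWalk E u w p) : u ∈ p :=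
  List.mem_of_mem_head? (by rw [h.1]; rfl)

lemma IsWalk.end_mem (h : IsWalk E u w p) : w ∈ p :=
  List.mem_of_mem_getLast? (by rw [h.2.1]; rfl)

lemma isWalk_single (u : V) : IsWalk E u u [u] := by
  refine ⟨rfl, rfl, by simp [List.Chain']⟩

lemma IsWalk.mono (hle : ∀ a b, E a b → F a b) (h : IsWalk E u w p) : IsWalk F u w p :=
  ⟨h.1, h.2.1, h.2.2.imp hle⟩

lemma head?_append_left (h : p ≠ []) (l : List V) : (p ++ l).head? = p.head? := by
  cases p with
  | nil => exact absurd rfl h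
  | cons a t => rfl

lemma IsWalk.append_edge (h1 : IsWalk E u a p) (h2 : IsWalk E b w q) (hab : E a b) :
    IsWalk E u w (p ++ q) := by
  refine ⟨?_, ?_, ?_⟩
  · rw [head?_append_left h1.ne_nil, h1.1]
  · rw [List.getLast?_append_of_ne_nil _ h2.ne_nil, h2.2.1]
  · simp only [List.Chain']
    rw [List.isChain_append]
    exact ⟨h1.2.2, h2.2.2, by
      intro x hx y hy
      rw [h1.2.1] at hx
      rw [h2.1] at hy
      cases hx; cases hy; exact hab⟩

lemma eq_cons_head_tail (h : p.head? = some u) : p = u :: p.tail := by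
  cases p with
  | nil => simp at h
  | cons a t => simp at h; subst h; rfl

lemma IsWalk.append (h1 : IsWalk E u x p) (h2 : IsWalk E x w q) :
    IsWalk E u w (p ++ q.tail) := by
  have hq := eq_cons_head_tail h2.1
  cases hqt : q.tail with
  | nil =>
    have : q = [x] := by rw [hq, hqt]
    rw [this] at h2
    have hxw : x = w := by simpa [IsWalk] using h2.2.1
    simpa using hxw ▸ h1
  | cons c t =>
    have hq' : q = x :: c :: t := by rw [hq, hqt]
    rw [hq'] at h2
    have hchain : (c :: t).Chain' E ∧ E x c := by
      have := h2.2.2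
      simp only [List.Chain'] at this
      rw [List.isChain_cons_cons] at this
      exact ⟨this.2, this.1⟩
    have h2' : IsWalk E c w (c :: t) := by
      refine ⟨rfl, ?_, hchain.1⟩
      have := h2.2.1
      rwa [List.getLast?_cons_cons] at this
    exact h1.append_edge h2' hchain.2

lemma walk_split {p₁ p₂ : List V} {z : V} (h : IsWalk E u w (p₁ ++ z :: p₂)) :
    IsWalk E u z (p₁ ++ [z]) ∧ IsWalk E z w (z :: p₂) := by
  constructor
  · refine ⟨?_, List.getLast?_concat, ?_⟩
    · rw [← h.1]
      cases p₁ with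
      | nil => rfl
      | cons a t => rw [head?_append_left (by simp), head?_append_left (by simp)]
    · rw [chain'_iff_pxs]
      intro q hq
      exact (chain'_iff_pxs.mp h.2.2) q
        (pxs_subset_of_prefix ⟨p₂, by simp⟩ q hq)
  · refine ⟨rfl, ?_, ?_⟩
    · rw [← h.2.1]
      exact (List.getLast?_append_of_ne_nil _ (by simp)).symm
    · rw [chain'_iff_pxs]
      intro q hq
      exact (chain'_iff_pxs.mp h.2.2) q (pxs_subset_of_suffix ⟨p₁, rfl⟩ q hq)

lemma not_nodup_split (h : ¬ p.Nodup) : ∃ s x t₁ t₂, p = s ++ x :: t₁ ++ x :: t₂ := by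
  induction p with
  | nil => simp at h
  | cons y t ih =>
    by_cases hy : y ∈ t
    · obtain ⟨t₁, t₂, ht⟩ := List.append_of_mem hy
      exact ⟨[], y, t₁, t₂, by rw [ht]; rfl⟩
    · have : ¬ t.Nodup := fun hn => h (List.nodup_cons.mpr ⟨hy, hn⟩)
      obtain ⟨s, x, t₁, t₂, ht⟩ := ih this
      exact ⟨y :: s, x, t₁, t₂, by rw [ht]; rfl⟩

lemma exists_path_of_walk' : ∀ (n : ℕ) (p : List V), p.length ≤ n → IsWalk E u w p →
    ∃ q, IsPath E u w q ∧ ∀ x ∈ q, x ∈ p := by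
  intro n
  induction n with
  | zero => intro p hp hw; exact absurd (List.length_eq_zero_iff.mp (Nat.le_zero.mp hp)) hw.ne_nil
  | succ n ih =>
    intro p hp hw
    by_cases hnd : p.Nodup
    · exact ⟨p, ⟨hw, hnd⟩, fun x hx => hx⟩
    · obtain ⟨s, x, t₁, t₂, hpe⟩ := not_nodup_split hnd
      subst hpe
      have hsplit1 := walk_split (p₁ := s) (p₂ := t₁ ++ x :: t₂) (by simpa using hw)
      have hsplit2 := walk_split (p₁ := x :: t₁) (p₂ := t₂) (by simpa using hsplit1.2)
      have hw' : IsWalk E u w (s ++ [x] ++ (x :: t₂).tail) :=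
        hsplit1.1.append hsplit2.2
      have hw'' : IsWalk E u w (s ++ x :: t₂) := by simpa using hw'
      have hlen : (s ++ x :: t₂).length ≤ n := by
        simp only [List.length_append, List.length_cons] at hp ⊢
        omega
      obtain ⟨q, hq, hsub⟩ := ih _ hlen hw''
      refine ⟨q, hq, fun y hy => ?_⟩
      have := hsub y hy
      simp only [List.mem_append, List.mem_cons] at this ⊢
      tauto

lemma exists_path_of_walk (h : IsWalk E u w p) : ∃ q, IsPath E u w q ∧ ∀ x ∈ q, x ∈ p :=
  exists_path_of_walk' p.length p le_rfl h

lemma first_split {S : V → Prop} : ∀ {p : List V}, (∃ x ∈ p, S x) →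
    ∃ p₁ z p₂, p = p₁ ++ z :: p₂ ∧ S z ∧ ∀ y ∈ p₁, ¬ S y := by
  intro p
  induction p with
  | nil => simp
  | cons a t ih =>
    intro hex
    by_cases ha : S a
    · exact ⟨[], a, t, rfl, ha, by simp⟩
    · have : ∃ x ∈ t, S x := by
        obtain ⟨x, hx, hSx⟩ := hex
        rcases List.mem_cons.mp hx with rfl | hx
        · exact absurd hSx ha
        · exact ⟨x, hx, hSx⟩
      obtain ⟨p₁, z, p₂, he, hz, hall⟩ := ih this
      exact ⟨a :: p₁, z, p₂, by rw [he]; rfl, hz, by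
        intro y hy
        rcases List.mem_cons.mp hy with rfl | hy
        · exact ha
        · exact hall y hy⟩

lemma last_split {S : V → Prop} : ∀ {p : List V}, (∃ x ∈ p, S x) →
    ∃ p₁ z p₂, p = p₁ ++ z :: p₂ ∧ S z ∧ ∀ y ∈ p₂, ¬ S y := by
  intro p
  induction p with
  | nil => simp
  | cons a t ih =>
    intro hex
    by_cases ht : ∃ x ∈ t, S x
    · obtain ⟨p₁, z, p₂, he, hz, hall⟩ := ih ht
      exact ⟨a :: p₁, z, p₂, by rw [he]; rfl, hz, hall⟩
    · push_neg at ht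
      have ha : S a := by
        obtain ⟨x, hx, hSx⟩ := hex
        rcases List.mem_cons.mp hx with rfl | hx
        · exact hSx
        · exact absurd hSx (ht x hx)
      exact ⟨[], a, t, rfl, ha, ht⟩

end Walks

section Menger
open List MAux

def EL (L : List (V × V)) : V → V → Prop := fun a b => (a, b) ∈ L

theorem menger2 (v0 : V) : ∀ (n : ℕ) (L : List (V × V)) (A B : Set V), L.length ≤ n →
    (∀ t : V, ∃ x y p, x ∈ A ∧ y ∈ B ∧ IsPath (EL L) x y p ∧ t ∉ p) →
    ∃ x₁ y₁ p₁ x₂ y₂ p₂, x₁ ∈ A ∧ y₁ ∈ B ∧ x₂ ∈ A ∧ y₂ ∈ B ∧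
      IsPath (EL L) x₁ y₁ p₁ ∧ IsPath (EL L) x₂ y₂ p₂ ∧
      ∀ z, z ∈ p₁ → z ∈ p₂ → False := by
  have single_of_nil : ∀ (x y : V) (p : List V), IsWalk (EL ([] : List (V × V))) x y p →
      p = [x] ∧ y = x := by
    intro x y p hw
    cases p with
    | nil => exact absurd rfl hw.ne_nil
    | cons c t =>
      cases t with
      | nil =>
        have hc : c = x := by simpa using hw.1
        subst hc
        have hy : y = c := by
          have := hw.2.1
          simp only [List.getLast?_singleton, Option.some_inj] at this
          exact this.symm
        exact ⟨rfl, hy⟩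
      | cons d t =>
        exfalso
        have := hw.2.2
        simp only [List.Chain'] at this
        rw [List.isChain_cons_cons] at this
        exact (by simpa [EL] using this.1 : False)
  have nilcase : ∀ (A B : Set V),
      (∀ t : V, ∃ x y p, x ∈ A ∧ y ∈ B ∧ IsPath (EL ([] : List (V × V))) x y p ∧ t ∉ p) →
      ∃ x₁ y₁ p₁ x₂ y₂ p₂, x₁ ∈ A ∧ y₁ ∈ B ∧ x₂ ∈ A ∧ y₂ ∈ B ∧
        IsPath (EL ([] : List (V × V))) x₁ y₁ p₁ ∧ IsPath (EL ([] : List (V × V))) x₂ y₂ p₂ ∧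
        ∀ z, z ∈ p₁ → z ∈ p₂ → False := by
    intro A B hyp
    obtain ⟨x, y, p, hx, hy, hp, -⟩ := hyp v0
    obtain ⟨hpe, hyx⟩ := single_of_nil x y p hp.1
    obtain ⟨x', y', p', hx', hy', hp', hnp'⟩ := hyp x
    obtain ⟨hpe', hyx'⟩ := single_of_nil x' y' p' hp'.1
    have hxx : x' ≠ x := fun h => hnp' (by rw [hpe', h]; simp)
    refine ⟨x, y, p, x', y', p', hx, hy, hx', hy', hp, hp', ?_⟩
    intro z hz1 hz2
    rw [hpe] at hz1; rw [hpe'] at hz2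
    simp only [List.mem_singleton] at hz1 hz2
    exact hxx (hz2 ▸ hz1)
  intro n
  induction n with
  | zero =>
    intro L A B hlen hyp
    have hL : L = [] := List.length_eq_zero_iff.mp (Nat.le_zero.mp hlen)
    subst hL
    exact nilcase A B hyp
  | succ n ih =>
    intro L A B hlen hyp
    cases L with
    | nil => exact nilcase A B hyp
    | cons e L' =>
      obtain ⟨a, b⟩ := e
      have hmonoL : ∀ x y, EL L' x y → EL ((a, b) :: L') x y :=
        fun x y h => List.mem_cons_of_mem _ h
      by_cases hstep : ∀ t : V, ∃ x y p, x ∈ A ∧ y ∈ B ∧ IsPath (EL L') x y p ∧ t ∉ p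
      · obtain ⟨x₁, y₁, p₁, x₂, y₂, p₂, h1, h2, h3, h4, h5, h6, h7⟩ :=
          ih L' A B (by simp at hlen; omega) hstep
        exact ⟨x₁, y₁, p₁, x₂, y₂, p₂, h1, h2, h3, h4,
          ⟨h5.1.mono hmonoL, h5.2⟩, ⟨h6.1.mono hmonoL, h6.2⟩, h7⟩
      · push_neg at hstep
        obtain ⟨s, hsep⟩ := hstep
        have key1 : ∀ x y p, x ∈ A → y ∈ B → IsPath (EL ((a, b) :: L')) x y p → s ∉ p →
            (a, b) ∈ pxs p := by
          intro x y p hx hy hp hs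
          by_contra hnot
          refine hs (hsep x y p hx hy ⟨⟨hp.1.1, hp.1.2.1, ?_⟩, hp.2⟩)
          rw [chain'_iff_pxs]
          intro q hq
          have hqL : (q.1, q.2) ∈ (a, b) :: L' := (chain'_iff_pxs.mp hp.1.2.2) q hq
          rcases List.mem_cons.mp hqL with hq' | hq'
          · exact absurd (by rwa [← Prod.mk.eta (p := q), hq'] at hq) hnot
          · exact hq'
        have hsa : s ≠ a := by
          intro hEq; subst hEq
          obtain ⟨x, y, p, hx, hy, hp, hnp⟩ := hyp s
          exact hnp (fst_mem (key1 x y p hx hy hp hnp))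
        have hsb : s ≠ b := by
          intro hEq; subst hEq
          obtain ⟨x, y, p, hx, hy, hp, hnp⟩ := hyp s
          exact hnp (snd_mem (key1 x y p hx hy hp hnp))
        have hab : a ≠ b := by
          intro hEq; subst hEq
          obtain ⟨x, y, p, hx, hy, hp, hnp⟩ := hyp s
          exact (nodup_pxs_ne hp.2 (key1 x y p hx hy hp hnp)) rfl
        have hypA : ∀ t : V, ∃ x z q, x ∈ A ∧ z ∈ {z : V | z = s ∨ z = a} ∧
            IsPath (EL L') x z q ∧ t ∉ q := by
          intro t
          obtain ⟨x, y, p, hx, hy, hp, hnp⟩ := hyp t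
          have hhit : ∃ z ∈ p, z = s ∨ z = a := by
            by_cases hs : s ∈ p
            · exact ⟨s, hs, Or.inl rfl⟩
            · exact ⟨a, fst_mem (key1 x y p hx hy hp hs), Or.inr rfl⟩
          obtain ⟨p₁, z, p₂, hpe, hz, hall⟩ := first_split hhit
          subst hpe
          have hw := (walk_split hp.1).1
          have hpre : (p₁ ++ [z]) <+: (p₁ ++ z :: p₂) := ⟨p₂, by simp⟩
          refine ⟨x, z, p₁ ++ [z], hx, hz, ⟨⟨hw.1, hw.2.1, ?_⟩, hpre.sublist.nodup hp.2⟩,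
            fun hm => hnp (hpre.sublist.mem hm)⟩
          rw [chain'_iff_pxs]
          intro q hq
          have hqL : (q.1, q.2) ∈ (a, b) :: L' :=
            (chain'_iff_pxs.mp hp.1.2.2) q (pxs_subset_of_prefix hpre q hq)
          rcases List.mem_cons.mp hqL with hq' | hq'
          · exfalso
            have hq1 : q.1 = a := congrArg Prod.fst hq'
            have hmem : q.1 ∈ (p₁ ++ [z]).dropLast := fst_mem_dropLast hq
            rw [List.dropLast_concat] at hmem
            exact hall q.1 hmem (Or.inr hq1)
          · exact hq'
        have hypB : ∀ t : V, ∃ z y q, z ∈ {z : V | z = s ∨ z = b} ∧ y ∈ B ∧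
            IsPath (EL L') z y q ∧ t ∉ q := by
          intro t
          obtain ⟨x, y, p, hx, hy, hp, hnp⟩ := hyp t
          have hhit : ∃ z ∈ p, z = s ∨ z = b := by
            by_cases hs : s ∈ p
            · exact ⟨s, hs, Or.inl rfl⟩
            · exact ⟨b, snd_mem (key1 x y p hx hy hp hs), Or.inr rfl⟩
          obtain ⟨p₁, z, p₂, hpe, hz, hall⟩ := last_split hhit
          subst hpe
          have hw := (walk_split hp.1).2
          have hsuf : (z :: p₂) <:+ (p₁ ++ z :: p₂) := ⟨p₁, rfl⟩
          refine ⟨z, y, z :: p₂, hz, hy, ⟨⟨hw.1, hw.2.1, ?_⟩, hsuf.sublist.nodup hp.2⟩,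
            fun hm => hnp (hsuf.sublist.mem hm)⟩
          rw [chain'_iff_pxs]
          intro q hq
          have hqL : (q.1, q.2) ∈ (a, b) :: L' :=
            (chain'_iff_pxs.mp hp.1.2.2) q (pxs_subset_of_suffix hsuf q hq)
          rcases List.mem_cons.mp hqL with hq' | hq'
          · exfalso
            have hq2 : q.2 = b := congrArg Prod.snd hq'
            have hmem : q.2 ∈ (z :: p₂).tail := snd_mem_tail hq
            rw [List.tail_cons] at hmem
            exact hall q.2 hmem (Or.inr hq2)
          · exact hq'
        obtain ⟨u₁, z₁, P₁, u₂, z₂, P₂, hu₁, hz₁, hu₂, hz₂, hP₁, hP₂, hdisjP⟩ :=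
          ih L' A {z : V | z = s ∨ z = a} (by simp at hlen; omega) hypA
        obtain ⟨z₃, y₃, Q₁, z₄, y₄, Q₂, hz₃, hy₃, hz₄, hy₄, hQ₁, hQ₂, hdisjQ⟩ :=
          ih L' {z : V | z = s ∨ z = b} B (by simp at hlen; omega) hypB
        have hz12 : z₁ ≠ z₂ := fun h => hdisjP z₁ hP₁.1.end_mem (h ▸ hP₂.1.end_mem)
        have hz34 : z₃ ≠ z₄ := fun h => hdisjQ z₃ hQ₁.1.start_mem (h ▸ hQ₂.1.start_mem)
        obtain ⟨us, Ps, hPs, husA, ua, Pa, hPa, huaA, hdP⟩ :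
            ∃ us Ps, IsPath (EL L') us s Ps ∧ us ∈ A ∧
              ∃ ua Pa, IsPath (EL L') ua a Pa ∧ ua ∈ A ∧
                ∀ z, z ∈ Ps → z ∈ Pa → False := by
          rcases hz₁ with rfl | rfl
          · rcases hz₂ with rfl | rfl
            · exact absurd rfl hz12
            · exact ⟨u₁, P₁, hP₁, hu₁, u₂, P₂, hP₂, hu₂, hdisjP⟩
          · rcases hz₂ with rfl | rfl
            · exact ⟨u₂, P₂, hP₂, hu₂, u₁, P₁, hP₁, hu₁, fun z h1 h2 => hdisjP z h2 h1⟩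
            · exact absurd rfl hz12
        obtain ⟨ys, Qs, hQs, hysB, yb, Qb, hQb, hybB, hdQ⟩ :
            ∃ ys Qs, IsPath (EL L') s ys Qs ∧ ys ∈ B ∧
              ∃ yb Qb, IsPath (EL L') b yb Qb ∧ yb ∈ B ∧
                ∀ z, z ∈ Qs → z ∈ Qb → False := by
          rcases hz₃ with rfl | rfl
          · rcases hz₄ with rfl | rfl
            · exact absurd rfl hz34
            · exact ⟨y₃, Q₁, hQ₁, hy₃, y₄, Q₂, hQ₂, hy₄, hdisjQ⟩
          · rcases hz₄ with rfl | rfl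
            · exact ⟨y₄, Q₂, hQ₂, hy₄, y₃, Q₁, hQ₁, hy₃, fun z h1 h2 => hdisjQ z h2 h1⟩
            · exact absurd rfl hz34
        have cross : ∀ (P Q : List V) (uP cP dQ yQ : V),
            IsWalk (EL L') uP cP P → P.Nodup → uP ∈ A →
            IsWalk (EL L') dQ yQ Q → Q.Nodup → yQ ∈ B →
            (s ∈ P → cP = s) → (s ∈ Q → dQ = s) →
            ∀ x, x ∈ P → x ∈ Q → x = s := by
          intro P Q uP cP dQ yQ hP hPnd hA hQ hQnd hB hsP hsQ x hxP hxQ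
          obtain ⟨p₁, p₂, hPe⟩ := List.append_of_mem hxP
          obtain ⟨q₁, q₂, hQe⟩ := List.append_of_mem hxQ
          subst hPe; subst hQe
          have h1 := (walk_split hP).1
          have h2 := (walk_split hQ).2
          have hR : IsWalk (EL L') uP yQ ((p₁ ++ [x]) ++ (x :: q₂).tail) := h1.append h2
          obtain ⟨R, hRp, hRsub⟩ := exists_path_of_walk hR
          have hsR := hRsub s (hsep uP yQ R hA hB hRp)
          simp only [List.tail_cons, List.mem_append, List.mem_singleton] at hsR
          rcases hsR with (hs | hs) | hs
          · exfalso
            have hcP : cP = s := hsP (List.mem_append.mpr (Or.inl hs))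
            have hcmem : cP ∈ x :: p₂ := by
              have hg := hP.2.1
              rw [List.getLast?_append_of_ne_nil _ (by simp)] at hg
              exact List.mem_of_mem_getLast? (by rw [hg]; rfl)
            rw [hcP] at hcmem
            exact (List.disjoint_of_nodup_append hPnd) hs hcmem
          · exact hs.symm
          · have hdQ' : dQ = s :=
              hsQ (List.mem_append.mpr (Or.inr (List.mem_cons_of_mem _ hs)))
            cases q₁ with
            | nil =>
              have hx' : x = dQ := by simpa using hQ.1
              rw [hdQ'] at hx'
              exact hx'
            | cons c t =>
              exfalso
              have hdc : c = dQ := by simpa using hQ.1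
              have : s ∈ c :: t := by rw [hdc, hdQ']; exact List.mem_cons_self
              exact (List.disjoint_of_nodup_append hQnd) this (List.mem_cons_of_mem _ hs)
        have sPs : s ∈ Ps := hPs.1.end_mem
        have sQs : s ∈ Qs := hQs.1.start_mem
        have snPa : s ∉ Pa := fun h => hdP s sPs h
        have snQb : s ∉ Qb := fun h => hdQ s sQs h
        have crossSS : ∀ x, x ∈ Ps → x ∈ Qs → x = s :=
          cross Ps Qs us s s ys hPs.1 hPs.2 husA hQs.1 hQs.2 hysB (fun _ => rfl) (fun _ => rfl)
        have crossSB : ∀ x, x ∈ Ps → x ∈ Qb → x = s :=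
          cross Ps Qb us s b yb hPs.1 hPs.2 husA hQb.1 hQb.2 hybB (fun _ => rfl)
            (fun h => (snQb h).elim)
        have crossAS : ∀ x, x ∈ Pa → x ∈ Qs → x = s :=
          cross Pa Qs ua a s ys hPa.1 hPa.2 huaA hQs.1 hQs.2 hysB (fun h => (snPa h).elim)
            (fun _ => rfl)
        have crossAB : ∀ x, x ∈ Pa → x ∈ Qb → False := fun x h1 h2 =>
          snPa ((cross Pa Qb ua a b yb hPa.1 hPa.2 huaA hQb.1 hQb.2 hybB
            (fun h => (snPa h).elim) (fun h => (snQb h).elim) x h1 h2) ▸ h1)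
        obtain ⟨qt, hqt⟩ : ∃ qt, Qs = s :: qt := ⟨Qs.tail, eq_cons_head_tail hQs.1.1⟩
        subst hqt
        have hsqt : s ∉ qt := (List.nodup_cons.mp hQs.2).1
        have walk1 : IsWalk (EL ((a, b) :: L')) ua yb (Pa ++ Qb) :=
          (hPa.1.mono hmonoL).append_edge (hQb.1.mono hmonoL) (List.mem_cons_self)
        have nodup1 : (Pa ++ Qb).Nodup := hPa.2.append hQb.2 crossAB
        have walk2 : IsWalk (EL ((a, b) :: L')) us ys (Ps ++ qt) := by
          have := (hPs.1.mono hmonoL).append ((hQs.1.mono hmonoL))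
          simpa using this
        have nodup2 : (Ps ++ qt).Nodup := by
          refine hPs.2.append ((List.tail_sublist (s :: qt)).nodup hQs.2) ?_
          intro z hz1 hz2
          have : z = s := crossSS z hz1 (List.mem_cons_of_mem _ hz2)
          rw [this] at hz2
          exact hsqt hz2
        refine ⟨ua, yb, Pa ++ Qb, us, ys, Ps ++ qt, huaA, hybB, husA, hysB,
          ⟨walk1, nodup1⟩, ⟨walk2, nodup2⟩, ?_⟩
        intro z hz1 hz2
        rcases List.mem_append.mp hz1 with hza | hzb <;>
          rcases List.mem_append.mp hz2 with hzs | hzt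
        · exact hdP z hzs hza
        · have : z = s := crossAS z hza (List.mem_cons_of_mem _ hzt)
          rw [this] at hza; exact snPa hza
        · have : z = s := crossSB z hzs hzb
          rw [this] at hzb; exact snQb hzb
        · exact hdQ z (List.mem_cons_of_mem _ hzt) hzb

end Menger

section Assemble
open List MAux

lemma walk_of_reachIn {E : V → V → Prop} {S : Set V} {u w : V} (h : ReachIn E S u w) :
    ∃ p, IsWalk E u w p := by
  induction h with
  | refl => exact ⟨[u], isWalk_single u⟩
  | tail h1 h2 ih =>
    obtain ⟨p, hp⟩ := ih
    exact ⟨p ++ [_], hp.append_edge (isWalk_single _) h2.2.2⟩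

end Assemble

open List MAux in
/-- A vertex `w ≠ v` of a strongly connected digraph satisfies `imd(w) = v` in the
flowgraph `G(v)` iff `(v,w)` is an edge or there are two internally vertex-disjoint
paths from `v` to `w`. -/
theorem stmt5 (E : V → V → Prop) (hSC : SCOn E Set.univ) (v w : V) (hwv : w ≠ v) :
    IsImd E v v w ↔
      E v w ∨ ∃ p₁ p₂, IsPath E v w p₁ ∧ IsPath E v w p₂ ∧
        ∀ x, x ∈ p₁ → x ∈ p₂ → x = v ∨ x = w := by
  classical
  constructor
  · intro h
    have havoid : ∀ d : V, d ≠ v → d ≠ w → ∃ p, IsPath E v w p ∧ d ∉ p := by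
      intro d hdv hdw
      have hnd : ¬ Dominates E v d w := by
        intro hdom
        have hdv' := h.2.2 d hdom hdw
        have hm := hdv' [v] (isWalk_single v)
        simp only [List.mem_singleton] at hm
        exact hdv hm
      rw [Dominates] at hnd
      push_neg at hnd
      obtain ⟨p, hp, hdp⟩ := hnd
      obtain ⟨q, hq, hsub⟩ := exists_path_of_walk hp
      exact ⟨q, hq, fun hm => hdp (hsub d hm)⟩
    obtain ⟨p0w, hp0w⟩ := walk_of_reachIn (hSC v trivial w trivial)
    obtain ⟨P0, hP0, -⟩ := exists_path_of_walk hp0w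
    by_cases hvw : E v w
    · exact Or.inl hvw
    right
    have hfex : ∀ d : V, ∃ p, IsPath E v w p ∧ (d ≠ v → d ≠ w → d ∉ p) := by
      intro d
      by_cases hd : d ≠ v ∧ d ≠ w
      · obtain ⟨p, hp, hdp⟩ := havoid d hd.1 hd.2
        exact ⟨p, hp, fun _ _ => hdp⟩
      · exact ⟨P0, hP0, fun h1 h2 => absurd ⟨h1, h2⟩ hd⟩
    choose f hf1 hf2 using hfex
    set L : List (V × V) := MAux.pxs P0 ++ (P0.map fun d => MAux.pxs (f d)).flatten with hLdef
    have hLE : ∀ x y : V, EL L x y → E x y := by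
      intro x y hxy
      have hxy' : (x, y) ∈ L := hxy
      rw [hLdef, List.mem_append] at hxy'
      rcases hxy' with hq | hq
      · exact (chain'_iff_pxs.mp hP0.1.2.2) (x, y) hq
      · rw [List.mem_flatten] at hq
        obtain ⟨l, hl, hql⟩ := hq
        rw [List.mem_map] at hl
        obtain ⟨d, -, rfl⟩ := hl
        exact (chain'_iff_pxs.mp (hf1 d).1.2.2) (x, y) hql
    have hLpath : ∀ p, IsPath E v w p → (∀ q ∈ pxs p, q ∈ L) → IsPath (EL L) v w p := by
      intro p hp hsub
      exact ⟨⟨hp.1.1, hp.1.2.1, by rw [chain'_iff_pxs]; intro q hq; exact hsub q hq⟩, hp.2⟩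
    have hP0L : IsPath (EL L) v w P0 :=
      hLpath P0 hP0 (fun q hq => by rw [hLdef]; exact List.mem_append.mpr (Or.inl hq))
    have hfL : ∀ d ∈ P0, IsPath (EL L) v w (f d) := by
      intro d hd
      refine hLpath (f d) (hf1 d) (fun q hq => ?_)
      rw [hLdef]
      refine List.mem_append.mpr (Or.inr ?_)
      rw [List.mem_flatten]
      exact ⟨pxs (f d), List.mem_map.mpr ⟨d, hd, rfl⟩, hq⟩
    have hAvoidL : ∀ d : V, d ≠ v → d ≠ w → ∃ p, IsPath (EL L) v w p ∧ d ∉ p := by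
      intro d hdv hdw
      by_cases hd : d ∈ P0
      · exact ⟨f d, hfL d hd, hf2 d hdv hdw⟩
      · exact ⟨P0, hP0L, hd⟩
    set L₂ : List (V × V) :=
      L.filter (fun q => q.1 ≠ v ∧ q.1 ≠ w ∧ q.2 ≠ v ∧ q.2 ≠ w) with hL2def
    set A : Set V := {x | (v, x) ∈ L ∧ x ≠ v ∧ x ≠ w} with hAdef
    set B : Set V := {x | (x, w) ∈ L ∧ x ≠ v ∧ x ≠ w} with hBdef
    have hL2sub : ∀ q : V × V, q ∈ L₂ → q ∈ L ∧ q.1 ≠ v ∧ q.1 ≠ w ∧ q.2 ≠ v ∧ q.2 ≠ w := by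
      intro q hq
      rw [hL2def, List.mem_filter] at hq
      refine ⟨hq.1, by simpa using hq.2⟩
    have hypM : ∀ t : V, ∃ x y p, x ∈ A ∧ y ∈ B ∧ IsPath (EL L₂) x y p ∧ t ∉ p := by
      intro t
      obtain ⟨p, hp, htp⟩ : ∃ p, IsPath (EL L) v w p ∧ (t ∉ p ∨ t = v ∨ t = w) := by
        by_cases ht : t ≠ v ∧ t ≠ w
        · obtain ⟨p, hp, h1⟩ := hAvoidL t ht.1 ht.2
          exact ⟨p, hp, Or.inl h1⟩
        · refine ⟨P0, hP0L, Or.inr ?_⟩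
          by_contra hc; push_neg at hc; exact ht ⟨hc.1, hc.2⟩
      obtain ⟨r, hr⟩ : ∃ r, p = v :: r := ⟨p.tail, eq_cons_head_tail hp.1.1⟩
      subst hr
      have hrne : r ≠ [] := by
        intro he; subst he
        have hg := hp.1.2.1
        simp only [List.getLast?_singleton, Option.some_inj] at hg
        exact hwv hg.symm
      obtain ⟨mid, hmid⟩ : ∃ mid, r = mid ++ [w] := by
        have hg : r.getLast hrne = w := by
          have hg0 := hp.1.2.1
          have : (v :: r).getLast? = r.getLast? := by
            cases r with
            | nil => exact absurd rfl hrne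
            | cons c t => exact List.getLast?_cons_cons
          rw [this, List.getLast?_eq_getLast hrne] at hg0
          exact Option.some_inj.mp hg0
        exact ⟨r.dropLast, by rw [← hg, List.dropLast_append_getLast]⟩
      subst hmid
      have hmidne : mid ≠ [] := by
        intro he; subst he
        have hpm : (v, w) ∈ pxs (v :: ([] ++ [w])) := by simp [pxs]
        have := (chain'_iff_pxs.mp hp.1.2.2) (v, w) hpm
        exact hvw (hLE v w this)
      have hnd := hp.2
      have hvmid : v ∉ mid := by
        rw [List.nodup_cons] at hnd
        exact fun hm => hnd.1 (List.mem_append.mpr (Or.inl hm))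
      have hwmid : w ∉ mid := by
        rw [List.nodup_cons] at hnd
        have hd := List.disjoint_of_nodup_append hnd.2
        exact fun hm => hd hm (by simp)
      obtain ⟨m0, mt, hm0⟩ : ∃ m0 mt, mid = m0 :: mt := by
        cases mid with
        | nil => exact absurd rfl hmidne
        | cons m0 mt => exact ⟨m0, mt, rfl⟩
      have hmidinfix : mid <:+: (v :: (mid ++ [w])) := ⟨[v], [w], by simp⟩
      have hmidchain : ∀ q ∈ pxs mid, (q.1, q.2) ∈ L₂ := by
        intro q hq
        have hqp : q ∈ pxs (v :: (mid ++ [w])) := pxs_subset_of_infix hmidinfix q hq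
        have hqL : (q.1, q.2) ∈ L := (chain'_iff_pxs.mp hp.1.2.2) q hqp
        have h1 : q.1 ∈ mid := fst_mem hq
        have h2 : q.2 ∈ mid := snd_mem hq
        rw [hL2def, List.mem_filter]
        refine ⟨hqL, by
          simp only [decide_eq_true_eq]
          exact ⟨fun he => hvmid (he ▸ h1), fun he => hwmid (he ▸ h1),
            fun he => hvmid (he ▸ h2), fun he => hwmid (he ▸ h2)⟩⟩
      have hpair1 : (v, m0) ∈ pxs (v :: (mid ++ [w])) := by
        rw [hm0]
        exact List.mem_cons_self
      have hpairlast : (mid.getLast hmidne, w) ∈ pxs (v :: (mid ++ [w])) := by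
        have hgp := getLast_pair_mem (l := v :: mid) (by simp) w
        rw [List.getLast_cons hmidne] at hgp
        simpa using hgp
      have hm0mem : m0 ∈ mid := by rw [hm0]; exact List.mem_cons_self
      have hm1mem : mid.getLast hmidne ∈ mid := List.getLast_mem hmidne
      have hm0A : m0 ∈ A := by
        rw [hAdef]
        exact ⟨(chain'_iff_pxs.mp hp.1.2.2) (v, m0) hpair1,
          fun he => hvmid (he ▸ hm0mem), fun he => hwmid (he ▸ hm0mem)⟩
      have hm1B : mid.getLast hmidne ∈ B := by
        rw [hBdef]
        exact ⟨(chain'_iff_pxs.mp hp.1.2.2) _ hpairlast,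
          fun he => hvmid (he ▸ hm1mem), fun he => hwmid (he ▸ hm1mem)⟩
      refine ⟨m0, mid.getLast hmidne, mid, hm0A, hm1B,
        ⟨⟨by rw [hm0]; rfl, List.getLast?_eq_getLast hmidne, ?_⟩, ?_⟩, ?_⟩
      · rw [chain'_iff_pxs]
        exact fun q hq => hmidchain q hq
      · have : mid <+ (v :: (mid ++ [w])) := hmidinfix.sublist
        exact this.nodup hp.2
      · rcases htp with htp | rfl | rfl
        · exact fun hm => htp (List.mem_cons_of_mem _ (List.mem_append.mpr (Or.inl hm)))
        · exact hvmid
        · exact hwmid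
    obtain ⟨x₁, y₁, q₁, x₂, y₂, q₂, hx₁, hy₁, hx₂, hy₂, hq₁, hq₂, hdisj⟩ :=
      menger2 v L₂.length L₂ A B le_rfl hypM
    have hverts : ∀ (x y : V) (p : List V), x ∈ A → IsPath (EL L₂) x y p →
        ∀ z ∈ p, z ≠ v ∧ z ≠ w := by
      intro x y p hxA hp z hz
      cases p with
      | nil => simp at hz
      | cons c t =>
        cases t with
        | nil =>
          simp only [List.mem_singleton] at hz
          subst hz
          have hc : z = x := by
            have := hp.1.1
            simp only [List.head?_cons, Option.some_inj] at this
            exact this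
          subst hc
          rw [hAdef] at hxA
          exact ⟨hxA.2.1, hxA.2.2⟩
        | cons d t =>
          obtain ⟨q, hq, hq'⟩ := exists_pxs_of_mem hz (by simp)
          have hqL2 : (q.1, q.2) ∈ L₂ := (chain'_iff_pxs.mp hp.1.2.2) q hq
          have hprops := (hL2sub _ hqL2).2
          rcases hq' with h | h
          · exact ⟨h ▸ hprops.1, h ▸ hprops.2.1⟩
          · exact ⟨h ▸ hprops.2.2.1, h ▸ hprops.2.2.2⟩
    have hq₁verts := hverts x₁ y₁ q₁ hx₁ hq₁
    have hq₂verts := hverts x₂ y₂ q₂ hx₂ hq₂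
    have hL2E : ∀ a b : V, EL L₂ a b → E a b := fun a b hab => hLE a b (hL2sub _ hab).1
    have hq₁E : IsWalk E x₁ y₁ q₁ := hq₁.1.mono hL2E
    have hq₂E : IsWalk E x₂ y₂ q₂ := hq₂.1.mono hL2E
    rw [hAdef] at hx₁ hx₂
    rw [hBdef] at hy₁ hy₂
    have wk1 : IsWalk E v w ([v] ++ q₁ ++ [w]) :=
      ((isWalk_single v).append_edge hq₁E (hLE v x₁ hx₁.1)).append_edge
        (isWalk_single w) (hLE y₁ w hy₁.1)
    have wk2 : IsWalk E v w ([v] ++ q₂ ++ [w]) :=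
      ((isWalk_single v).append_edge hq₂E (hLE v x₂ hx₂.1)).append_edge
        (isWalk_single w) (hLE y₂ w hy₂.1)
    have nd : ∀ (q : List V), q.Nodup → (∀ z ∈ q, z ≠ v ∧ z ≠ w) →
        ([v] ++ q ++ [w]).Nodup := by
      intro q hq hzs
      refine List.Nodup.append (List.Nodup.append (by simp) hq ?_) (by simp) ?_
      · intro z hz1 hz2
        simp only [List.mem_singleton] at hz1
        exact (hzs z hz2).1 hz1
      · intro z hz1 hz2
        simp only [List.mem_singleton] at hz2
        subst hz2
        rcases List.mem_append.mp hz1 with hz | hz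
        · simp only [List.mem_singleton] at hz
          exact hwv hz
        · exact (hzs z hz).2 rfl
    refine ⟨[v] ++ q₁ ++ [w], [v] ++ q₂ ++ [w],
      ⟨wk1, nd q₁ hq₁.2 hq₁verts⟩, ⟨wk2, nd q₂ hq₂.2 hq₂verts⟩, ?_⟩
    intro z hz1 hz2
    simp only [List.mem_append, List.mem_singleton] at hz1 hz2
    rcases hz1 with (hz | hz) | hz
    · exact Or.inl hz
    · rcases hz2 with (hz' | hz') | hz'
      · exact Or.inl hz'
      · exact absurd hz' (fun hh => hdisj z hz hh)
      · exact Or.inr hz'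
    · exact Or.inr hz
  · intro h
    have hex : ∃ p₁ p₂, IsPath E v w p₁ ∧ IsPath E v w p₂ ∧
        ∀ x, x ∈ p₁ → x ∈ p₂ → x = v ∨ x = w := by
      rcases h with hvw | h
      · refine ⟨[v, w], [v, w], ?_, ?_, ?_⟩
        · exact ⟨⟨rfl, rfl, List.isChain_pair.mpr hvw⟩, by simp [Ne.symm hwv]⟩
        · exact ⟨⟨rfl, rfl, List.isChain_pair.mpr hvw⟩, by simp [Ne.symm hwv]⟩
        · intro x hx _
          simpa using hx
      · exact h
    obtain ⟨p₁, p₂, hp₁, hp₂, hsh⟩ := hex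
    refine ⟨fun p hp => hp.start_mem, Ne.symm hwv, ?_⟩
    intro d hdom hdw
    have hd1 := hdom p₁ hp₁.1
    have hd2 := hdom p₂ hp₂.1
    rcases hsh d hd1 hd2 with rfl | rfl
    · exact fun p hp => hp.start_mem
    · exact absurd rfl hdw
end

section
/- Let G be a strongly connected directed graph, v a vertex, C a 2-vertex-connected component of G with v ∉ C, and x ∈ C a vertex whose immediate dominator w = imd(x) in the flowgraph G(v) satisfies w ∉ C. Then w dominates every vertex of C in G(v). -/
variable {V : Type*}

lemma walk_snoc' {E : V → V → Prop} {u b c : V} {q : List V}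
    (hq : IsWalk E u b q) (h : E b c) : IsWalk E u c (q ++ [c]) := by
  obtain ⟨h1, h2, h3⟩ := hq
  have hne : q ≠ [] := by rintro rfl; simp at h1
  refine ⟨?_, ?_, ?_⟩
  · rwa [List.head?_append_of_ne_nil _ hne]
  · simp
  · change List.IsChain E (q ++ [c]); rw [List.isChain_append]
    refine ⟨h3, List.isChain_singleton _, ?_⟩
    intro a ha y hy
    simp at hy
    rw [h2] at ha
    simp at ha
    subst ha; subst hy; exact h

/-- If `C` is a 2-vertex-connected component of a strongly connected digraph `G` with
`v ∉ C`, and `x ∈ C` has immediate dominator `w ∉ C` in the flowgraph `G(v)`, then `w`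
dominates every vertex of `C`. -/
theorem stmt8 (E : V → V → Prop) (hSC : SCOn E Set.univ) (v : V) (C : Set V)
    (hC : IsTwoVCC E C) (hv : v ∉ C) (x w : V) (hx : x ∈ C)
    (himd : IsImd E v w x) (hw : w ∉ C) :
    ∀ y ∈ C, Dominates E v w y := by
  intro y hy p hp
  have h3 : 3 ≤ C.ncard := hC.1.1
  have hfin : C.Finite := Set.finite_of_ncard_ne_zero (by omega)
  have hns : ¬ C ⊆ ({x, y} : Set V) := by
    intro h
    have h1 := Set.ncard_le_ncard h (Set.toFinite _)
    have h2 : ({x, y} : Set V).ncard ≤ 2 := by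
      have := Set.ncard_insert_le x ({y} : Set V)
      simp [Set.ncard_singleton] at this ⊢
      omega
    omega
  obtain ⟨z, hzC, hz⟩ := Set.not_subset.1 hns
  simp only [Set.mem_insert_iff, Set.mem_singleton_iff, not_or] at hz
  have hreach : ReachIn E (C \ {z}) y x :=
    hC.1.2 z hzC y ⟨hy, by simpa using fun h => hz.2 h.symm⟩
      x ⟨hx, by simpa using fun h => hz.1 h.symm⟩
  have key : ∀ {b : V}, ReachIn E (C \ {z}) y b →
      ∃ q, IsWalk E v b q ∧ ∀ a ∈ q, a ∈ p ∨ a ∈ C := by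
    intro b hb
    induction hb with
    | refl => exact ⟨p, hp, fun a ha => Or.inl ha⟩
    | tail _ step ih =>
      obtain ⟨q, hq, hmem⟩ := ih
      refine ⟨q ++ [_], walk_snoc' hq step.2.2, ?_⟩
      intro a ha
      rcases List.mem_append.1 ha with h | h
      · exact hmem a h
      · simp at h; subst h; exact Or.inr step.2.1.1
  obtain ⟨q, hq, hmem⟩ := key hreach
  rcases hmem w (himd.1 q hq) with h | h
  · exact h
  · exact absurd h hw
end

section
/- Let G = (V, E) be a directed graph, w a strong articulation point of G, and C a 2-vertex-connected component of G (with w possibly in C or not). Then all vertices of C \ {w} lie in one strongly connected component of G \ {w}. -/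
variable {V : Type*}

/-- If `w` is a strong articulation point of `G` and `C` is a 2-vertex-connected
component of `G`, then all vertices of `C \ {w}` lie in one strongly connected component
of `G \ {w}`. -/
theorem stmt9 [Fintype V] (E : V → V → Prop) (w : V) (hw : IsSAP E w)
    (C : Set V) (hC : IsTwoVCC E C) :
    ∃ D, IsSCCOn E (({w} : Set V)ᶜ) D ∧ C \ {w} ⊆ D := by
  obtain ⟨⟨hcard, hsc⟩, -⟩ := hC
  have hmono : ∀ {S T : Set V} {u x : V}, S ⊆ T → ReachIn E S u x → ReachIn E T u x := by
    intro S T u x hST h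
    exact Relation.ReflTransGen.mono (r := fun a b => a ∈ S ∧ b ∈ S ∧ E a b) (p := fun a b => a ∈ T ∧ b ∈ T ∧ E a b) (fun a b ⟨ha, hb, hab⟩ => ⟨hST ha, hST hb, hab⟩) u x h
  have key : ∀ u ∈ C \ {w}, ∀ x ∈ C \ {w}, ReachIn E ({w} : Set V)ᶜ u x := by
    intro u hu x hx
    by_cases hwC : w ∈ C
    · exact hmono (fun a ha => ha.2) (hsc w hwC u hu x hx)
    · have hz : (C \ {u, x}).Nonempty := by
        rw [Set.nonempty_iff_ne_empty]
        intro h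
        have hsub : C ⊆ {u, x} := by
          intro a ha
          by_contra hna
          exact Set.eq_empty_iff_forall_notMem.mp h a ⟨ha, hna⟩
        have := Set.ncard_le_ncard hsub (Set.toFinite _)
        have h2 : ({u, x} : Set V).ncard ≤ 2 := by
          apply le_trans (Set.ncard_insert_le _ _)
          simp [Set.ncard_singleton]
        omega
      obtain ⟨z, hzC, hz2⟩ := hz
      have hzu : z ≠ u := fun h => hz2 (by simp [h])
      have hzx : z ≠ x := fun h => hz2 (by simp [h])
      have hr := hsc z hzC u ⟨hu.1, fun h => hzu (Set.mem_singleton_iff.mp h).symm⟩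
        x ⟨hx.1, fun h => hzx (Set.mem_singleton_iff.mp h).symm⟩
      refine hmono ?_ hr
      intro a ha
      simp only [Set.mem_compl_iff, Set.mem_singleton_iff]
      intro h; exact hwC (h ▸ ha.1)
  have hne : (C \ {w}).Nonempty := by
    rw [Set.nonempty_iff_ne_empty]
    intro h
    have hsub : C ⊆ {w} := fun a ha => by
      by_contra hna; exact Set.eq_empty_iff_forall_notMem.mp h a ⟨ha, hna⟩
    have := Set.ncard_le_ncard hsub (Set.toFinite _)
    rw [Set.ncard_singleton] at this
    omega
  obtain ⟨u0, hu0⟩ := hne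
  refine ⟨{x | x ∈ ({w} : Set V)ᶜ ∧ ReachIn E ({w} : Set V)ᶜ u0 x ∧ ReachIn E ({w} : Set V)ᶜ x u0},
    ⟨fun x hx => hx.1, ⟨u0, hu0.2, Relation.ReflTransGen.refl, Relation.ReflTransGen.refl⟩,
     ?_, ?_⟩, ?_⟩
  · intro u hu x hx
    exact hu.2.2.trans hx.2.1
  · intro D hsub hDS hD
    ext x
    constructor
    · intro hx
      have hu0D : u0 ∈ D := hsub ⟨hu0.2, Relation.ReflTransGen.refl, Relation.ReflTransGen.refl⟩
      exact ⟨hDS hx, hD u0 hu0D x hx, hD x hx u0 hu0D⟩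
    · exact fun hx => hsub hx
  · intro x hx
    exact ⟨hx.2, key u0 hu0 x hx, key x hx u0 hu0⟩
end

section
/- Any two distinct k-vertex-connected components of a directed graph have at most k−1 vertices in common. -/
variable {V : Type*}

/-- Any two distinct `k`-vertex-connected components of a digraph have at most `k - 1`
vertices in common. -/
theorem stmt12 [Fintype V] (E : V → V → Prop) (k : ℕ) (C₁ C₂ : Set V)
    (h₁ : IsKVCC E k C₁) (h₂ : IsKVCC E k C₂) (hne : C₁ ≠ C₂) :
    (C₁ ∩ C₂).ncard < k := by
  by_contra h
  push_neg at h
  have hU : IsKVCSet E k (C₁ ∪ C₂) := by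
    constructor
    · exact le_trans h₁.1.1 (Set.ncard_le_ncard Set.subset_union_left (Set.toFinite _))
    · intro Y hY hYlt
      have hz : ((C₁ ∩ C₂) \ Y).Nonempty := by
        rw [Set.diff_nonempty]
        intro hsub
        exact absurd (lt_of_le_of_lt
          (h.trans (Set.ncard_le_ncard hsub (Set.toFinite _))) hYlt) (lt_irrefl _)
      obtain ⟨z, hz12, hzY⟩ := hz
      have key : ∀ S : Set V, IsKVCSet E k S → S ⊆ C₁ ∪ C₂ → z ∈ S → ∀ u ∈ S \ Y,
          ReachIn E ((C₁ ∪ C₂) \ Y) u z ∧ ReachIn E ((C₁ ∪ C₂) \ Y) z u := by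
        intro S hS hSsub hzS u hu
        have hYS : (Y ∩ S).ncard < k :=
          lt_of_le_of_lt (Set.ncard_le_ncard Set.inter_subset_left (Set.toFinite _)) hYlt
        have hSC := hS.2 (Y ∩ S) Set.inter_subset_right hYS
        have hsub : S \ (Y ∩ S) ⊆ (C₁ ∪ C₂) \ Y := by
          rintro a ⟨haS, haY⟩
          exact ⟨hSsub haS, fun hA => haY ⟨hA, haS⟩⟩
        have huS : u ∈ S \ (Y ∩ S) := ⟨hu.1, fun hA => hu.2 hA.1⟩
        have hzS' : z ∈ S \ (Y ∩ S) := ⟨hzS, fun hA => hzY hA.1⟩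
        exact ⟨reachIn_mono hsub (hSC u huS z hzS'),
               reachIn_mono hsub (hSC z hzS' u huS)⟩
      have step : ∀ u ∈ (C₁ ∪ C₂) \ Y,
          ReachIn E ((C₁ ∪ C₂) \ Y) u z ∧ ReachIn E ((C₁ ∪ C₂) \ Y) z u := by
        rintro u ⟨(hu1 | hu2), huY⟩
        · exact key C₁ h₁.1 Set.subset_union_left hz12.1 u ⟨hu1, huY⟩
        · exact key C₂ h₂.1 Set.subset_union_right hz12.2 u ⟨hu2, huY⟩
      intro u hu w hw
      exact Relation.ReflTransGen.trans (step u hu).1 (step w hw).2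
  have e1 := h₁.2 _ hU Set.subset_union_left
  have e2 := h₂.2 _ hU Set.subset_union_right
  exact hne (e1 ▸ e2)
end

section
/- Let G be a strongly connected directed graph that is not 2-vertex-connected but has at least 3 vertices, and let v be a vertex that is not a strong articulation point. Then at least one of the flowgraphs G(v) and G^R(v) contains a non-trivial dominator. -/
variable {V : Type*}

lemma walk_reachIn {E : V → V → Prop} {S : Set V} :
    ∀ (p : List V) (u x : V), p.head? = some u → p.getLast? = some x →
      p.Chain' E → (∀ y ∈ p, y ∈ S) → ReachIn E S u x
  | [], u, x, h, _, _, _ => by simp at h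
  | [a], u, x, h, h', _, _ => by
      simp at h h'; subst h; subst h'; exact Relation.ReflTransGen.refl
  | a :: b :: l, u, x, h, h', hc, hmem => by
      simp only [List.head?_cons, Option.some.injEq] at h
      subst h
      rw [List.getLast?_cons_cons] at h'
      replace hc := List.isChain_cons_cons.mp hc
      have hb : ReachIn E S b x :=
        walk_reachIn (b :: l) b x rfl h' hc.2 (fun y hy => hmem y (List.mem_cons_of_mem _ hy))
      exact Relation.ReflTransGen.head
        ⟨hmem a List.mem_cons_self, hmem b (by simp), hc.1⟩ hb

lemma reachIn_flip {E : V → V → Prop} {S : Set V} {u x : V}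
    (h : ReachIn (fun a b => E b a) S u x) : ReachIn E S x u := by
  have : Relation.ReflTransGen (Function.swap fun a b => a ∈ S ∧ b ∈ S ∧ E a b) u x := by
    refine Relation.ReflTransGen.mono (fun a b hab => ?_) u x h
    exact ⟨hab.2.1, hab.1, hab.2.2⟩
  exact Relation.reflTransGen_swap.mp this

/-- If a strongly connected digraph `G` with at least 3 vertices is not
2-vertex-connected and `v` is not a strong articulation point, then at least one of the
flowgraphs `G(v)` and `Gᴿ(v)` contains a non-trivial dominator. -/
theorem stmt14 [Fintype V] (E : V → V → Prop) (hSC : SCOn E Set.univ)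
    (h3 : 3 ≤ Fintype.card V)
    (hnot2vc : ∃ w : V, ¬ SCOn E (({w} : Set V)ᶜ))
    (v : V) (hv : SCOn E (({v} : Set V)ᶜ)) :
    (∃ u, NontrivDom E v u) ∨ (∃ u, NontrivDom (fun a b => E b a) v u) := by
  obtain ⟨w, hw⟩ := hnot2vc
  -- extract a failing pair
  simp only [SCOn, not_forall] at hw
  obtain ⟨a, ha, b, hb, hab⟩ := hw
  have haw : a ≠ w := ha
  have hbw : b ≠ w := hb
  have hvw : v ≠ w := by
    rintro rfl
    exact hab (hv a ha b hb)
  have hane : a ≠ b := by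
    rintro rfl
    exact hab Relation.ReflTransGen.refl
  -- walk avoiding w gives ReachIn in {w}ᶜ
  have key : ∀ (x y : V) (p : List V), IsWalk E x y p → w ∉ p →
      ReachIn E ({w} : Set V)ᶜ x y := by
    intro x y p hp hwp
    exact walk_reachIn p x y hp.1 hp.2.1 hp.2.2
      (fun z hz => by simp; rintro rfl; exact hwp hz)
  have keyR : ∀ (x y : V) (p : List V), IsWalk (fun a b => E b a) x y p → w ∉ p →
      ReachIn E ({w} : Set V)ᶜ y x := by
    intro x y p hp hwp
    exact reachIn_flip (walk_reachIn p x y hp.1 hp.2.1 hp.2.2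
      (fun z hz => by simp; rintro rfl; exact hwp hz))
  by_cases hbv : b = v
  · -- every reverse walk v → a must contain w
    right
    refine ⟨w, a, hbv ▸ hane, haw, fun p hp => ?_⟩
    by_contra hwp
    exact hab (hbv ▸ keyR v a p hp hwp)
  · by_cases h : ∀ p, IsWalk E v b p → w ∈ p
    · exact Or.inl ⟨w, b, hbv, hbw, h⟩
    · push_neg at h
      obtain ⟨p₀, hp₀, hwp₀⟩ := h
      have hvb : ReachIn E ({w} : Set V)ᶜ v b := key v b p₀ hp₀ hwp₀
      have hav : a ≠ v := by
        rintro rfl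
        exact hab hvb
      right
      refine ⟨w, a, hav, haw, fun q hq => ?_⟩
      by_contra hwq
      exact hab ((keyR v a q hq hwq).trans hvb)
end
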